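/- arXiv:1508.02439 — 9 statements merged into one kernel-verified Lean document; each statement's English description precedes it below -/
import Mathlib

section
/- Let A ∈ ℝ_{≥0}^{m×n} be a nonnegative matrix in which every column has a nonzero entry, and let opt = min{𝟙ᵀx : x ∈ ℝⁿ, x ≥ 0, Ax ≥ 𝟙} be the optimal value of the covering LP given by A. For each i ∈ [n] let m_i = min{A_{ji} : A_{ji} > 0}, r_i = max{A_{ji} : A_{ji} > 0}/m_i, and n_i = max(1, ⌈log₂ r_i⌉). Define the matrix Ā with columns indexed by pairs (i,l), i ∈ [n], l ∈ {1,…,n_i}, by Ā_{j,(i,l)} = min{A_{ji}, 2^l·m_i}, and let opt‾ = min{Σ_{i,l} x̄_{(i,l)} : x̄ ≥ 0, Āx̄ ≥ 𝟙, and x̄_{(i,l)} ≤ 2/(2^l·m_i) for every (i,l)}. Then opt = opt‾. -/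
/-!
Since `Ā ≤ A` entrywise, summing a feasible `xbar` over the levels of each column gives a
feasible point of the original LP of the same cost, so `opt ≤ opt‾`.

Conversely, let `x` be feasible. For each column `i` put all of `x i`, truncated to
`min (x i) (2 / c)`, on a single level `l`, where `c = 2 ^ l * m_i` and `l` is the least level
with `1 ≤ c * x i`, or the top level `n_i` if there is none. Then
`min (A j i) c * min (x i) (2 / c) ≥ min (A j i * x i) 1` for every entry: if `c * x i ≤ 2`
nothing is truncated, and either `c * x i ≥ 1` or `c ≥ M_i ≥ A j i`; if `c * x i > 2` then
`l = 1`, so `c = 2 * m_i ≤ 2 * A j i` and the truncated value `2 / c` alone covers the row.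
Finally, truncating the terms of a covering row at `1` keeps its sum `≥ 1`.
-/

open Finset

lemma one_le_sum_min_one {ι : Type*} [Fintype ι] {a : ι → ℝ} (ha : ∀ i, 0 ≤ a i)
    (h : 1 ≤ ∑ i, a i) : 1 ≤ ∑ i, min (a i) 1 := by
  by_cases hbig : ∃ i, 1 ≤ a i
  · obtain ⟨i, hi⟩ := hbig
    calc (1 : ℝ) = min (a i) 1 := (min_eq_right hi).symm
      _ ≤ ∑ i, min (a i) 1 :=
        single_le_sum (fun i _ => le_min (ha i) zero_le_one) (mem_univ i)
  · push Not at hbig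
    simpa only [min_eq_left (hbig _).le] using h

lemma le_two_pow_mul_of_ceil_logb_le {m M : ℝ} (hm : 0 < m) (hM : 0 < M) {k : ℕ}
    (hk : ⌈Real.logb 2 (M / m)⌉₊ ≤ k) : M ≤ 2 ^ k * m := by
  have hlog : Real.logb 2 (M / m) ≤ k := (Nat.le_ceil _).trans (by exact_mod_cast hk)
  rw [Real.logb_le_iff_le_rpow one_lt_two (div_pos hM hm), Real.rpow_natCast,
    div_le_iff₀ hm] at hlog
  exact hlog

lemma min_mul_one_le_min_mul_min {a c x : ℝ} (ha : 0 ≤ a) (hc : 0 < c) (hx : 0 ≤ x)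
    (hsmall : c * x ≤ 2 → 1 ≤ c * x ∨ a ≤ c) (hlarge : 2 < c * x → 0 < a → c ≤ 2 * a) :
    min (a * x) 1 ≤ min a c * min x (2 / c) := by
  rcases le_or_gt (c * x) 2 with hcx | hcx
  · rw [min_eq_left ((le_div_iff₀ hc).2 (by linarith)), min_mul_of_nonneg _ _ hx]
    rcases hsmall hcx with h | h
    · exact min_le_min le_rfl h
    · rw [min_eq_left (mul_le_mul_of_nonneg_right h hx)]
      exact min_le_left _ _
  · rcases ha.eq_or_lt with rfl | ha
    · simp [hc.le]
    have hcap : c / 2 ≤ min a c := le_min (by linarith [hlarge hcx ha]) (by linarith)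
    have hx2 : 2 / c ≤ x := (div_le_iff₀ hc).2 (by linarith)
    calc min (a * x) 1 ≤ 1 := min_le_right _ _
      _ = c / 2 * (2 / c) := by field_simp
      _ ≤ min a c * min x (2 / c) := by
        rw [min_eq_right hx2]
        exact mul_le_mul_of_nonneg_right hcap (by positivity)

lemma exists_level {m M x : ℝ} (hm : 0 < m) (hx : 0 ≤ x) {n : ℕ} (hn : 0 < n)
    (hM : M ≤ 2 ^ n * m) :
    ∃ l : Fin n, ∀ a, 0 ≤ a → (0 < a → m ≤ a ∧ a ≤ M) →
      min (a * x) 1 ≤ min a (2 ^ (l.1 + 1) * m) * min x (2 / (2 ^ (l.1 + 1) * m)) := by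
  classical
  have hex : ∃ k, 1 ≤ 2 ^ (k + 1) * m * x ∨ n ≤ k + 1 := ⟨n - 1, Or.inr (by omega)⟩
  set k := Nat.find hex
  have hkn : k < n := by
    have := Nat.find_min' hex (m := n - 1) (Or.inr (by omega))
    omega
  refine ⟨⟨k, hkn⟩, fun a ha hcol => ?_⟩
  refine min_mul_one_le_min_mul_min ha (by positivity) hx (fun _ => ?_) (fun hcx ha => ?_)
  · show 1 ≤ 2 ^ (k + 1) * m * x ∨ a ≤ 2 ^ (k + 1) * m
    rcases Nat.find_spec hex with h | h
    · exact Or.inl h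
    · rcases ha.eq_or_lt with rfl | ha
      · exact Or.inr (by positivity)
      · have hk : k + 1 = n := by omega
        exact Or.inr (by rw [hk]; exact (hcol ha).2.trans hM)
  · change 2 < 2 ^ (k + 1) * m * x at hcx
    show 2 ^ (k + 1) * m ≤ 2 * a
    rcases Nat.eq_zero_or_pos k with hk | hk
    · rw [hk, zero_add, pow_one]
      linarith [(hcol ha).1]
    · have hprev := Nat.find_min hex (m := k - 1) (by omega)
      push Not at hprev
      rw [Nat.sub_add_cancel hk] at hprev
      have : (2 : ℝ) ^ (k + 1) * m * x = 2 * (2 ^ k * m * x) := by ring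
      linarith [hprev.1]

section Reduction

variable {ι κ : Type*} [Fintype κ]

lemma one_le_sum_mul_sum_of_le {ν : κ → Type*} [∀ i, Fintype (ν i)] (A : Matrix ι κ ℝ)
    (B : ι → (Σ i, ν i) → ℝ) (hBA : ∀ j i l, B j ⟨i, l⟩ ≤ A j i) {x : (Σ i, ν i) → ℝ}
    (hx : ∀ p, 0 ≤ x p) {j : ι} (hcov : 1 ≤ ∑ p, B j p * x p) :
    1 ≤ ∑ i, A j i * ∑ l, x ⟨i, l⟩ := by
  calc (1 : ℝ) ≤ ∑ p, B j p * x p := hcov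
    _ = ∑ i, ∑ l, B j ⟨i, l⟩ * x ⟨i, l⟩ := Fintype.sum_sigma _
    _ ≤ ∑ i, ∑ l, A j i * x ⟨i, l⟩ :=
      sum_le_sum fun i _ => sum_le_sum fun l _ => mul_le_mul_of_nonneg_right (hBA j i l) (hx _)
    _ = ∑ i, A j i * ∑ l, x ⟨i, l⟩ := by simp only [mul_sum]

lemma exists_reduced_cover (A : Matrix ι κ ℝ) (hA : ∀ j i, 0 ≤ A j i) (mi Mi : κ → ℝ)
    (hmi : ∀ i, 0 < mi i) (hbounds : ∀ j i, 0 < A j i → mi i ≤ A j i ∧ A j i ≤ Mi i)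
    (ni : κ → ℕ) (hni : ∀ i, 0 < ni i) (hMi : ∀ i, Mi i ≤ 2 ^ ni i * mi i)
    {x : κ → ℝ} (hx : ∀ i, 0 ≤ x i) (hcov : ∀ j, 1 ≤ ∑ i, A j i * x i) :
    ∃ xbar : (Σ i, Fin (ni i)) → ℝ, (∀ p, 0 ≤ xbar p) ∧
      (∀ j, 1 ≤ ∑ p, min (A j p.1) (2 ^ (p.2.1 + 1) * mi p.1) * xbar p) ∧
      (∀ i (l : Fin (ni i)), xbar ⟨i, l⟩ ≤ 2 / (2 ^ (l.1 + 1) * mi i)) ∧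
      ∑ p, xbar p ≤ ∑ i, x i := by
  classical
  choose l hl using fun i => exists_level (hmi i) (hx i) (hni i) (hMi i)
  set c : κ → ℝ := fun i => 2 ^ ((l i).1 + 1) * mi i
  set y : κ → ℝ := fun i => min (x i) (2 / c i)
  have hc : ∀ i, 0 < c i := fun i => by positivity [hmi i]
  have hy : ∀ i, 0 ≤ y i := fun i => le_min (hx i) (by positivity [hc i])
  have hsum : ∀ f : (Σ i, Fin (ni i)) → ℝ,
      ∑ p, f p * (if p.2 = l p.1 then y p.1 else 0) = ∑ i, f ⟨i, l i⟩ * y i := fun f => by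
    simp only [Fintype.sum_sigma, mul_ite, mul_zero, sum_ite_eq', mem_univ, if_true]
  refine ⟨fun p => if p.2 = l p.1 then y p.1 else 0, fun p => ?_, fun j => ?_, fun i l' => ?_, ?_⟩
  · dsimp only
    split_ifs
    exacts [hy _, le_rfl]
  · rw [hsum]
    calc (1 : ℝ) ≤ ∑ i, min (A j i * x i) 1 :=
          one_le_sum_min_one (fun i => mul_nonneg (hA j i) (hx i)) (hcov j)
      _ ≤ ∑ i, min (A j i) (c i) * y i :=
          sum_le_sum fun i _ => hl i _ (hA j i) (hbounds j i)
  · dsimp only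
    split_ifs with h
    · subst h
      exact min_le_right _ _
    · positivity [hmi i]
  · have hmass := hsum fun _ => 1
    simp only [one_mul] at hmass
    rw [hmass]
    exact sum_le_sum fun i _ => min_le_left _ _

end Reduction

theorem diameter_reduction_equiv_general
    (m n : ℕ) (A : Matrix (Fin m) (Fin n) ℝ)
    (hA : ∀ j i, 0 ≤ A j i)
    (mi Mi : Fin n → ℝ)
    (hmi : ∀ i, IsLeast {a : ℝ | 0 < a ∧ ∃ j, A j i = a} (mi i))
    (hMi : ∀ i, IsGreatest {a : ℝ | 0 < a ∧ ∃ j, A j i = a} (Mi i))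
    (ni : Fin n → ℕ)
    (hni : ∀ i, ni i = max 1 ⌈Real.logb 2 (Mi i / mi i)⌉₊)
    (Abar : Fin m → ((i : Fin n) × Fin (ni i)) → ℝ)
    (hAbar : ∀ (j : Fin m) (i : Fin n) (l : Fin (ni i)),
      Abar j ⟨i, l⟩ = min (A j i) (2 ^ (l.1 + 1) * mi i))
    (opt optbar : ℝ)
    (hopt : IsLeast {c : ℝ | ∃ x : Fin n → ℝ, (∀ i, 0 ≤ x i) ∧
      (∀ j, 1 ≤ ∑ i, A j i * x i) ∧ c = ∑ i, x i} opt)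
    (hoptbar : IsLeast {c : ℝ | ∃ x : ((i : Fin n) × Fin (ni i)) → ℝ,
      (∀ p, 0 ≤ x p) ∧ (∀ j, 1 ≤ ∑ p, Abar j p * x p) ∧
      (∀ (i : Fin n) (l : Fin (ni i)), x ⟨i, l⟩ ≤ 2 / (2 ^ (l.1 + 1) * mi i)) ∧
      c = ∑ p, x p} optbar) :
    opt = optbar := by
  have hmi_pos : ∀ i, 0 < mi i := fun i => (hmi i).1.1
  have hbounds : ∀ j i, 0 < A j i → mi i ≤ A j i ∧ A j i ≤ Mi i :=
    fun j i h => ⟨(hmi i).2 ⟨h, j, rfl⟩, (hMi i).2 ⟨h, j, rfl⟩⟩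
  have hni_pos : ∀ i, 0 < ni i := fun i => by rw [hni i]; exact lt_max_of_lt_left one_pos
  have hMi_le : ∀ i, Mi i ≤ 2 ^ ni i * mi i := fun i =>
    le_two_pow_mul_of_ceil_logb_le (hmi_pos i) (hMi i).1.1 (by rw [hni i]; exact le_max_right _ _)
  apply le_antisymm
  · obtain ⟨xbar, hxbar, hcov, -, rfl⟩ := hoptbar.1
    refine hopt.2 ⟨fun i => ∑ l, xbar ⟨i, l⟩, fun i => sum_nonneg fun l _ => hxbar _,
      fun j => one_le_sum_mul_sum_of_le A Abar (fun j i l => (hAbar j i l).trans_le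
        (min_le_left _ _)) hxbar (hcov j), Fintype.sum_sigma _⟩
  · obtain ⟨x, hx, hcov, rfl⟩ := hopt.1
    obtain ⟨xbar, hxbar, hcov', hcap, hsum⟩ :=
      exists_reduced_cover A hA mi Mi hmi_pos hbounds ni hni_pos hMi_le hx hcov
    have hcovbar : ∀ j, 1 ≤ ∑ p, Abar j p * xbar p := fun j => by
      simpa only [← hAbar] using hcov' j
    exact (hoptbar.2 ⟨xbar, hxbar, hcovbar, hcap, rfl⟩).trans hsum

/-- Diameter reduction for covering LPs: the diameter-reduced covering LP given by `Ā`
(with coefficients capped at powers of two times the column minimum, and upper bounds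
on the variables) has the same optimal value as the original covering LP given by `A`. -/
theorem diameter_reduction_equiv
    (m n : ℕ) (A : Matrix (Fin m) (Fin n) ℝ)
    (hA : ∀ j i, 0 ≤ A j i)
    (hcol : ∀ i, ∃ j, 0 < A j i)
    (mi Mi : Fin n → ℝ)
    (hmi : ∀ i, IsLeast {a : ℝ | 0 < a ∧ ∃ j, A j i = a} (mi i))
    (hMi : ∀ i, IsGreatest {a : ℝ | 0 < a ∧ ∃ j, A j i = a} (Mi i))
    (ni : Fin n → ℕ)
    (hni : ∀ i, ni i = max 1 ⌈Real.logb 2 (Mi i / mi i)⌉₊)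
    (Abar : Fin m → ((i : Fin n) × Fin (ni i)) → ℝ)
    (hAbar : ∀ (j : Fin m) (i : Fin n) (l : Fin (ni i)),
      Abar j ⟨i, l⟩ = min (A j i) (2 ^ (l.1 + 1) * mi i))
    (opt optbar : ℝ)
    (hopt : IsLeast {c : ℝ | ∃ x : Fin n → ℝ, (∀ i, 0 ≤ x i) ∧
      (∀ j, 1 ≤ ∑ i, A j i * x i) ∧ c = ∑ i, x i} opt)
    (hoptbar : IsLeast {c : ℝ | ∃ x : ((i : Fin n) × Fin (ni i)) → ℝ,
      (∀ p, 0 ≤ x p) ∧ (∀ j, 1 ≤ ∑ p, Abar j p * x p) ∧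
      (∀ (i : Fin n) (l : Fin (ni i)), x ⟨i, l⟩ ≤ 2 / (2 ^ (l.1 + 1) * mi i)) ∧
      c = ∑ p, x p} optbar) :
    opt = optbar :=
  diameter_reduction_equiv_general m n A hA mi Mi hmi hMi ni hni Abar hAbar opt optbar hopt hoptbar
end

section
/- Let m, n ≥ 1, let A ∈ ℝ_{≥0}^{m×n} be normalized so that min_{j∈[m]} max_{i∈[n]} A_{ji} = 1, let opt be the optimal value of the covering LP given by A, let ε ∈ (0, 1/2], and set μ = ε/(4 log(nm/ε)). Let x* be an optimal solution of the covering LP (x* ≥ 0, Ax* ≥ 𝟙, 𝟙ᵀx* = opt) and let u* = (1 + ε/2)x*. Then f_μ(u*) ≤ (1 + ε)·opt, where f_μ(x) = 𝟙ᵀx + μΣ_{j=1}^m exp((1 − (Ax)_j)/μ). -/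
/-! Scaling `x*` by `1 + ε/2` over-satisfies every covering constraint by `ε/2`, so each penalty
term is at most `exp(-(ε/2)/μ) = (ε/nm)² ≤ ε/(nm)`, and since `μ ≤ 1/2` the whole penalty
`μ Σⱼ pⱼ` is at most `ε/2`. The normalization provides a row with entries at most `1`, which
forces `opt ≥ 1`, so this is absorbed by `(ε/2)·opt`. -/

open Finset Real

lemma exists_forall_le_of_inf'_sup'_eq {ι κ α : Type*} [LinearOrder α] {s : Finset ι}
    {t : Finset κ} {hs : s.Nonempty} {ht : t.Nonempty} {f : ι → κ → α} {a : α}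
    (h : s.inf' hs (fun j => t.sup' ht (f j)) = a) : ∃ j ∈ s, ∀ i ∈ t, f j i ≤ a := by
  obtain ⟨j, hj, hinf⟩ := exists_mem_eq_inf' hs fun j => t.sup' ht (f j)
  exact ⟨j, hj, fun i hi => h ▸ hinf ▸ le_sup' (f j) hi⟩

lemma one_le_sum_of_one_le_sum_mul {ι : Type*} {s : Finset ι} {a x : ι → ℝ}
    (hx : ∀ i ∈ s, 0 ≤ x i) (ha : ∀ i ∈ s, a i ≤ 1) (h : 1 ≤ ∑ i ∈ s, a i * x i) :
    1 ≤ ∑ i ∈ s, x i :=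
  h.trans <| sum_le_sum fun i hi => mul_le_of_le_one_left (hx i hi) (ha i hi)

lemma exp_penalty_le_of_one_le {μ δ s : ℝ} (hμ : 0 < μ) (hδ : 0 ≤ δ) (hs : 1 ≤ s) :
    exp ((1 - (1 + δ) * s) / μ) ≤ exp (-δ / μ) :=
  exp_le_exp.2 <| div_le_div_of_nonneg_right (by nlinarith) hμ.le

theorem smoothing_at_ustar_general
    (m n : ℕ) (hm : 0 < m) (hn : 0 < n)
    (A : Matrix (Fin m) (Fin n) ℝ)
    (hnorm : (Finset.univ.inf' ⟨⟨0, hm⟩, Finset.mem_univ _⟩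
        fun j => Finset.univ.sup' ⟨⟨0, hn⟩, Finset.mem_univ _⟩ fun i => A j i) = 1)
    (opt : ℝ)
    (ε : ℝ) (hε0 : 0 < ε) (hε1 : ε ≤ 1/2)
    (μ : ℝ) (hμ : μ = ε / (4 * Real.log ((n : ℝ) * m / ε)))
    (xstar : Fin n → ℝ) (hx0 : ∀ i, 0 ≤ xstar i)
    (hxf : ∀ j, 1 ≤ ∑ i, A j i * xstar i) (hxopt : ∑ i, xstar i = opt) :
    (∑ i, (1 + ε/2) * xstar i) +
      μ * ∑ j, Real.exp ((1 - ∑ i, A j i * ((1 + ε/2) * xstar i)) / μ)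
    ≤ (1 + ε) * opt := by
  obtain ⟨j₀, -, hrow⟩ := exists_forall_le_of_inf'_sup'_eq hnorm
  have hopt : 1 ≤ opt := hxopt ▸ one_le_sum_of_one_le_sum_mul (fun i _ => hx0 i) hrow (hxf j₀)
  have hn1 : (1 : ℝ) ≤ n := by exact_mod_cast hn
  have hm1 : (1 : ℝ) ≤ m := by exact_mod_cast hm
  set K := (n : ℝ) * m / ε
  have hK : 2 ≤ K := by rw [le_div_iff₀ hε0]; nlinarith
  have hlogK : 1 / 2 ≤ log K := by linarith [log_two_gt_d9, log_le_log two_pos hK]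
  have hμ0 : 0 < μ := hμ ▸ by positivity
  have hμ_half : μ ≤ 1 / 2 := by
    rw [hμ, div_le_iff₀ (by positivity)]; linarith
  have hpenalty : ∀ j, exp ((1 - ∑ i, A j i * ((1 + ε/2) * xstar i)) / μ) ≤ ε / (n * m) := by
    intro j
    calc exp ((1 - ∑ i, A j i * ((1 + ε/2) * xstar i)) / μ)
        = exp ((1 - (1 + ε/2) * ∑ i, A j i * xstar i) / μ) := by
          simp only [mul_sum, mul_left_comm]
      _ ≤ exp (-(ε/2) / μ) := exp_penalty_le_of_one_le hμ0 (by positivity) (hxf j)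
      _ ≤ exp (-log K) := by
          refine exp_le_exp.2 ?_
          rw [hμ]; field_simp; linarith
      _ = ε / (n * m) := by rw [exp_neg, exp_log (by positivity), inv_div]
  have hsum : ∑ j, exp ((1 - ∑ i, A j i * ((1 + ε/2) * xstar i)) / μ) ≤ ε :=
    calc _ ≤ ∑ _j : Fin m, ε / (n * m) := sum_le_sum fun j _ => hpenalty j
      _ = ε / n := by simp only [sum_const, card_univ, Fintype.card_fin, nsmul_eq_mul]; field_simp
      _ ≤ ε := div_le_self hε0.le hn1
  rw [← mul_sum, hxopt]
  nlinarith [mul_le_mul hμ_half hsum (sum_nonneg fun j _ => (exp_pos _).le) (by norm_num)]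

/-- With `μ = ε/(4 log(nm/ε))` and `u* = (1 + ε/2)x*` for an optimal solution `x*` of the
covering LP, the smoothed objective satisfies `f_μ(u*) ≤ (1 + ε)·opt`. -/
theorem smoothing_at_ustar
    (m n : ℕ) (hm : 0 < m) (hn : 0 < n)
    (A : Matrix (Fin m) (Fin n) ℝ) (hA : ∀ j i, 0 ≤ A j i)
    (hnorm : (Finset.univ.inf' ⟨⟨0, hm⟩, Finset.mem_univ _⟩
        fun j => Finset.univ.sup' ⟨⟨0, hn⟩, Finset.mem_univ _⟩ fun i => A j i) = 1)
    (opt : ℝ)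
    (hopt : IsLeast {c : ℝ | ∃ x : Fin n → ℝ, (∀ i, 0 ≤ x i) ∧
      (∀ j, 1 ≤ ∑ i, A j i * x i) ∧ c = ∑ i, x i} opt)
    (ε : ℝ) (hε0 : 0 < ε) (hε1 : ε ≤ 1/2)
    (μ : ℝ) (hμ : μ = ε / (4 * Real.log ((n : ℝ) * m / ε)))
    (xstar : Fin n → ℝ) (hx0 : ∀ i, 0 ≤ xstar i)
    (hxf : ∀ j, 1 ≤ ∑ i, A j i * xstar i) (hxopt : ∑ i, xstar i = opt) :
    (∑ i, (1 + ε/2) * xstar i) +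
      μ * ∑ j, Real.exp ((1 - ∑ i, A j i * ((1 + ε/2) * xstar i)) / μ)
    ≤ (1 + ε) * opt :=
  smoothing_at_ustar_general m n hm hn A hnorm opt ε hε0 hε1 μ hμ xstar hx0 hxf hxopt
end

section
/- Let m, n ≥ 1, let A ∈ ℝ_{≥0}^{m×n} be normalized so that min_{j∈[m]} max_{i∈[n]} A_{ji} = 1, let opt be the optimal value of the covering LP given by A, let ε ∈ (0, 1/2], and set μ = ε/(4 log(nm/ε)). Then for every x ∈ ℝⁿ with x ≥ 0, f_μ(x) ≥ (1 − ε)·opt, where f_μ(x) = 𝟙ᵀx + μΣ_{j=1}^m exp((1 − (Ax)_j)/μ). -/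
/-!
If every row of `Ax` is at least `1 - ε`, then `x / (1 - ε)` is feasible, so the linear part
`𝟙ᵀx` alone is at least `(1 - ε)·opt`. Otherwise some row has `(Ax)_j < 1 - ε`, and its penalty
term alone is at least `μ·exp(ε/μ) = ε t⁴ / (4 log t)` with `t = nm/ε`, which exceeds `n`; and
`opt ≤ n` because the normalization gives every row an entry `≥ 1`, making `𝟙` feasible.
-/

open Real Finset

section CoveringLP

variable {ι κ : Type*} [Fintype ι]

def coveringValues (A : κ → ι → ℝ) : Set ℝ :=
  {c | ∃ x : ι → ℝ, (∀ i, 0 ≤ x i) ∧ (∀ j, 1 ≤ ∑ i, A j i * x i) ∧ c = ∑ i, x i}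

variable {A : κ → ι → ℝ} {opt : ℝ}

theorem coveringValues_nonneg {c : ℝ} (hc : c ∈ coveringValues A) : 0 ≤ c := by
  obtain ⟨x, hx, -, rfl⟩ := hc
  exact sum_nonneg fun i _ => hx i

theorem IsLeast.coveringValues_mul_le (hopt : IsLeast (coveringValues A) opt) {c : ℝ}
    (hc : 0 < c) {x : ι → ℝ} (hx : ∀ i, 0 ≤ x i) (hAx : ∀ j, c ≤ ∑ i, A j i * x i) :
    c * opt ≤ ∑ i, x i := by
  have hfeas : ∑ i, x i / c ∈ coveringValues A := by
    refine ⟨fun i => x i / c, fun i => div_nonneg (hx i) hc.le, fun j => ?_, rfl⟩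
    simp_rw [mul_div_assoc', ← sum_div]
    exact (one_le_div hc).2 (hAx j)
  have := hopt.2 hfeas
  rw [← sum_div, le_div_iff₀ hc] at this
  linarith

theorem IsLeast.coveringValues_le_card (hopt : IsLeast (coveringValues A) opt)
    (hA : ∀ j i, 0 ≤ A j i) (hrow : ∀ j, ∃ i, 1 ≤ A j i) : opt ≤ Fintype.card ι := by
  have hone : ∀ j, 1 ≤ ∑ i, A j i * 1 := fun j => by
    obtain ⟨i, hi⟩ := hrow j
    simp only [mul_one]
    exact hi.trans (single_le_sum (fun i _ => hA j i) (mem_univ i))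
  simpa using hopt.2 ⟨fun _ => 1, fun _ => zero_le_one, hone, rfl⟩

end CoveringLP

theorem four_mul_log_le_pow_three {t : ℝ} (ht : 2 ≤ t) : 4 * log t ≤ t ^ 3 := by
  have hlog := log_le_sub_one_of_pos (by linarith : 0 < t)
  nlinarith [mul_nonneg (mul_nonneg (by linarith : (0 : ℝ) ≤ t - 2) (by linarith : 0 ≤ t))
    (by linarith : (0 : ℝ) ≤ t + 2)]

theorem le_mul_exp_div_of_eq_div_log {N M ε μ : ℝ} (hN : 1 ≤ N) (hM : 1 ≤ M) (hε0 : 0 < ε)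
    (hε1 : ε ≤ 1 / 2) (hμ : μ = ε / (4 * log (N * M / ε))) : N ≤ μ * exp (ε / μ) := by
  set t := N * M / ε with ht
  have ht2 : 2 ≤ t := by rw [ht, le_div_iff₀ hε0]; nlinarith
  have hlog : 0 < log t := log_pos (by linarith)
  have hexp : exp (ε / μ) = t ^ 4 := by
    rw [hμ, div_div_cancel₀ hε0.ne', ← exp_log (by positivity : 0 < t ^ 4), log_pow]
    norm_num
  have hεt : N ≤ ε * t := by
    rw [ht, mul_div_cancel₀ _ hε0.ne']; nlinarith
  rw [hexp, hμ, div_mul_eq_mul_div, le_div_iff₀ (by positivity)]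
  calc N * (4 * log t) ≤ ε * t * t ^ 3 :=
        mul_le_mul hεt (four_mul_log_le_pow_three ht2) (by positivity) (by positivity)
    _ = ε * t ^ 4 := by ring

/-- With `μ = ε/(4 log(nm/ε))`, the smoothed objective satisfies
`f_μ(x) ≥ (1 − ε)·opt` for every `x ≥ 0`. -/
theorem smoothing_lower_bound
    (m n : ℕ) (hm : 0 < m) (hn : 0 < n)
    (A : Matrix (Fin m) (Fin n) ℝ) (hA : ∀ j i, 0 ≤ A j i)
    (hnorm : (Finset.univ.inf' ⟨⟨0, hm⟩, Finset.mem_univ _⟩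
        fun j => Finset.univ.sup' ⟨⟨0, hn⟩, Finset.mem_univ _⟩ fun i => A j i) = 1)
    (opt : ℝ)
    (hopt : IsLeast {c : ℝ | ∃ x : Fin n → ℝ, (∀ i, 0 ≤ x i) ∧
      (∀ j, 1 ≤ ∑ i, A j i * x i) ∧ c = ∑ i, x i} opt)
    (ε : ℝ) (hε0 : 0 < ε) (hε1 : ε ≤ 1/2)
    (μ : ℝ) (hμ : μ = ε / (4 * Real.log ((n : ℝ) * m / ε))) :
    ∀ x : Fin n → ℝ, (∀ i, 0 ≤ x i) →
      (1 - ε) * opt ≤ (∑ i, x i) + μ * ∑ j, Real.exp ((1 - ∑ i, A j i * x i) / μ) := by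
  intro x hx
  have hopt : IsLeast (coveringValues A) opt := hopt
  have hopt0 : 0 ≤ opt := coveringValues_nonneg hopt.1
  have hn_le : (n : ℝ) ≤ μ * exp (ε / μ) :=
    le_mul_exp_div_of_eq_div_log (Nat.one_le_cast.2 hn) (Nat.one_le_cast.2 hm) hε0 hε1 hμ
  have hμ0 : 0 < μ :=
    (pos_iff_pos_of_mul_pos ((Nat.cast_pos.2 hn).trans_le hn_le)).2 (exp_pos _)
  have hpenalty : 0 ≤ μ * ∑ j, exp ((1 - ∑ i, A j i * x i) / μ) := by positivity
  by_cases hrows : ∀ j, 1 - ε ≤ ∑ i, A j i * x i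
  · have := hopt.coveringValues_mul_le (by linarith) hx hrows
    linarith
  push Not at hrows
  obtain ⟨j, hj⟩ := hrows
  have hrow : ∀ j, ∃ i, 1 ≤ A j i := fun j => by
    obtain ⟨i, -, hi⟩ := (le_sup'_iff _).1 (hnorm ▸ inf'_le _ (mem_univ j))
    exact ⟨i, hi⟩
  calc (1 - ε) * opt ≤ opt := by nlinarith
    _ ≤ n := by simpa using hopt.coveringValues_le_card hA hrow
    _ ≤ μ * exp (ε / μ) := hn_le
    _ ≤ μ * exp ((1 - ∑ i, A j i * x i) / μ) := by gcongr; linarith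
    _ ≤ μ * ∑ j, exp ((1 - ∑ i, A j i * x i) / μ) := by
      gcongr
      exact single_le_sum (f := fun j => exp ((1 - ∑ i, A j i * x i) / μ))
        (fun j _ => (exp_pos _).le) (mem_univ j)
    _ ≤ (∑ i, x i) + μ * ∑ j, exp ((1 - ∑ i, A j i * x i) / μ) :=
      le_add_of_nonneg_left (sum_nonneg fun i _ => hx i)
end

section
/- Let m, n ≥ 1, let A ∈ ℝ_{≥0}^{m×n} be normalized so that min_{j∈[m]} max_{i∈[n]} A_{ji} = 1, let opt be the optimal value of the covering LP given by A, let ε ∈ (0, 1/2], and set μ = ε/(4 log(nm/ε)). Then every x ≥ 0 with f_μ(x) ≤ 2·opt satisfies Ax ≥ (1 − ε)·𝟙, where f_μ(x) = 𝟙ᵀx + μΣ_{j=1}^m exp((1 − (Ax)_j)/μ). -/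
/-!
Since `𝟙` is feasible, `opt ≤ n`. If `(Ax)_j < 1 - ε`, the single penalty term of row `j` already
exceeds `μ exp(ε/μ) = μ t⁴` with `t = nm/ε`, and `log t ≤ t - 1` makes `μ t⁴ ≥ 2n ≥ 2 opt`.
-/

open Finset Real

section CoveringLP

variable {ι κ : Type*} [Fintype ι]

def coveringLPValues (A : Matrix κ ι ℝ) : Set ℝ :=
  {c : ℝ | ∃ x : ι → ℝ, (∀ i, 0 ≤ x i) ∧ (∀ j, 1 ≤ ∑ i, A j i * x i) ∧ c = ∑ i, x i}

noncomputable def smoothedCoverObjective [Fintype κ] (A : Matrix κ ι ℝ) (μ : ℝ) (x : ι → ℝ) : ℝ :=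
  (∑ i, x i) + μ * ∑ j, exp ((1 - ∑ i, A j i * x i) / μ)

lemma card_mem_coveringLPValues {A : Matrix κ ι ℝ} (hrow : ∀ j, 1 ≤ ∑ i, A j i) :
    (Fintype.card ι : ℝ) ∈ coveringLPValues A :=
  ⟨fun _ => 1, fun _ => zero_le_one, fun j => by simpa using hrow j, by simp⟩

lemma one_sub_le_of_smoothedCoverObjective_le [Fintype κ] {A : Matrix κ ι ℝ} {μ δ : ℝ}
    {x : ι → ℝ} (hμ : 0 < μ) (hx : ∀ i, 0 ≤ x i)
    (hf : smoothedCoverObjective A μ x ≤ μ * exp (δ / μ)) (j : κ) : 1 - δ ≤ ∑ i, A j i * x i := by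
  by_contra! hj
  have hpenalty : μ * exp (δ / μ) < μ * exp ((1 - ∑ i, A j i * x i) / μ) := by
    gcongr
    linarith
  have hsingle : exp ((1 - ∑ i, A j i * x i) / μ) ≤ ∑ j, exp ((1 - ∑ i, A j i * x i) / μ) :=
    single_le_sum (f := fun j => exp ((1 - ∑ i, A j i * x i) / μ))
      (fun _ _ => (exp_pos _).le) (mem_univ j)
  have hxsum : 0 ≤ ∑ i, x i := sum_nonneg fun i _ => hx i
  have hsum := mul_le_mul_of_nonneg_left hsingle hμ.le
  unfold smoothedCoverObjective at hf
  linarith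

end CoveringLP

lemma le_sum_of_le_sup' {ι α : Type*} [AddCommMonoid α] [LinearOrder α] [IsOrderedAddMonoid α]
    {s : Finset ι} (hs : s.Nonempty) {f : ι → α} {a : α}
    (hf : ∀ i ∈ s, 0 ≤ f i) (h : a ≤ s.sup' hs f) : a ≤ ∑ i ∈ s, f i :=
  h.trans (sup'_le _ _ fun _ hi => single_le_sum hf hi)

lemma eight_mul_log_le_pow_three {t : ℝ} (ht : 2 ≤ t) : 8 * log t ≤ t ^ 3 := by
  have hlog : log t ≤ t - 1 := log_le_sub_one_of_pos (by linarith)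
  -- `t³ - 8t + 8 = (t - 2)(t² + 2t - 4)`
  nlinarith [mul_nonneg (sub_nonneg.2 ht) (show 0 ≤ t ^ 2 + 2 * t - 4 by nlinarith)]

lemma exp_div_div_four_mul_log {ε t : ℝ} (hε : ε ≠ 0) (ht : 1 < t) :
    exp (ε / (ε / (4 * log t))) = t ^ 4 := by
  have hlog : log t ≠ 0 := (log_pos ht).ne'
  rw [div_div_cancel₀ (by positivity), show 4 * log t = log (t ^ 4) by rw [log_pow]; norm_num,
    exp_log (by positivity)]

lemma two_mul_le_smoothing_param_mul_pow_four {n m ε : ℝ} (hn : 1 ≤ n) (hm : 1 ≤ m)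
    (hε0 : 0 < ε) (hε1 : ε ≤ 1 / 2) :
    2 * n ≤ ε / (4 * log (n * m / ε)) * (n * m / ε) ^ 4 := by
  set t := n * m / ε with ht
  have hεt : ε * t = n * m := by rw [ht]; field_simp
  have ht2 : 2 ≤ t := by rw [ht, le_div_iff₀ hε0]; nlinarith
  have hlog : 0 < log t := log_pos (by linarith)
  rw [div_mul_eq_mul_div, le_div_iff₀ (by positivity)]
  calc 2 * n * (4 * log t) = n * (8 * log t) := by ring
    _ ≤ n * t ^ 3 * 1 := by nlinarith [eight_mul_log_le_pow_three ht2]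
    _ ≤ n * t ^ 3 * m := by gcongr
    _ = ε * t ^ 4 := by linear_combination (-t ^ 3) * hεt

/-- With `μ = ε/(4 log(nm/ε))`, every `x ≥ 0` with `f_μ(x) ≤ 2·opt` satisfies
`Ax ≥ (1 − ε)𝟙`. -/
theorem smoothing_near_feasible
    (m n : ℕ) (hm : 0 < m) (hn : 0 < n)
    (A : Matrix (Fin m) (Fin n) ℝ) (hA : ∀ j i, 0 ≤ A j i)
    (hnorm : (Finset.univ.inf' ⟨⟨0, hm⟩, Finset.mem_univ _⟩
        fun j => Finset.univ.sup' ⟨⟨0, hn⟩, Finset.mem_univ _⟩ fun i => A j i) = 1)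
    (opt : ℝ)
    (hopt : IsLeast {c : ℝ | ∃ x : Fin n → ℝ, (∀ i, 0 ≤ x i) ∧
      (∀ j, 1 ≤ ∑ i, A j i * x i) ∧ c = ∑ i, x i} opt)
    (ε : ℝ) (hε0 : 0 < ε) (hε1 : ε ≤ 1/2)
    (μ : ℝ) (hμ : μ = ε / (4 * Real.log ((n : ℝ) * m / ε))) :
    ∀ x : Fin n → ℝ, (∀ i, 0 ≤ x i) →
      (∑ i, x i) + μ * ∑ j, Real.exp ((1 - ∑ i, A j i * x i) / μ) ≤ 2 * opt →
      ∀ j, 1 - ε ≤ ∑ i, A j i * x i := by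
  intro x hx hf
  have hN : (1 : ℝ) ≤ n := by exact_mod_cast hn
  have hM : (1 : ℝ) ≤ m := by exact_mod_cast hm
  have ht : 1 < (n : ℝ) * m / ε := by rw [lt_div_iff₀ hε0]; nlinarith
  have hμ0 : 0 < μ := by rw [hμ]; exact div_pos hε0 (by linarith [log_pos ht])
  have hrow (j : Fin m) : 1 ≤ ∑ i, A j i :=
    le_sum_of_le_sup' _ (fun i _ => hA j i) (hnorm ▸ inf'_le _ (mem_univ j))
  have hopt_le : opt ≤ n := by
    simpa using hopt.2 (card_mem_coveringLPValues hrow)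
  refine one_sub_le_of_smoothedCoverObjective_le hμ0 hx ?_
  calc smoothedCoverObjective A μ x ≤ 2 * opt := hf
    _ ≤ 2 * n := by linarith
    _ ≤ μ * ((n : ℝ) * m / ε) ^ 4 := hμ ▸ two_mul_le_smoothing_param_mul_pow_four hN hM hε0 hε1
    _ = μ * exp (ε / μ) := by rw [hμ, exp_div_div_four_mul_log hε0.ne' ht]
end

section
/- Let μ > 0, A ∈ ℝ_{≥0}^{m×n}, f_μ(x) = 𝟙ᵀx + μΣ_{j=1}^m exp((1 − (Ax)_j)/μ), and fix i ∈ [n] with the i-th column of A nonzero; write ‖A_{:i}‖_∞ = max_j A_{ji}. Then for every x ∈ ℝⁿ with x ≥ 0 and every γ ∈ ℝ, |log((1 − ∇_i f_μ(x + γe_i))/(1 − ∇_i f_μ(x)))| ≤ (‖A_{:i}‖_∞/μ)·|γ|, where e_i is the i-th standard basis vector. (Here 1 − ∇_i f_μ(y) = Σ_j A_{ji} exp((1 − (Ay)_j)/μ) > 0, so the logarithm is well defined.) -/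
/-!
Moving `x` by `γ` along `e_i` multiplies the `j`-th term of `Σ_j A_{ji} exp((1 − (Ax)_j)/μ)` by
`exp(−A_{ji} γ / μ)`, a factor between `exp(−c)` and `exp c` for `c = ‖A_{:i}‖_∞ |γ| / μ`.
The ratio of the two sums is thus a weighted average of such factors, so its logarithm lies
in `[−c, c]`.
-/

open Finset Real

theorem Function.update_add_eq_add_single {ι R : Type*} [DecidableEq ι] [AddZeroClass R]
    (x : ι → R) (i : ι) (γ : R) : Function.update x i (x i + γ) = x + Pi.single i γ := by
  ext k
  rcases eq_or_ne k i with rfl | hk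
  · simp
  · simp [hk]

theorem dotProduct_update_add {ι R : Type*} [Fintype ι] [DecidableEq ι]
    [NonUnitalNonAssocSemiring R]
    (a x : ι → R) (i : ι) (γ : R) :
    a ⬝ᵥ Function.update x i (x i + γ) = a ⬝ᵥ x + a i * γ := by
  rw [Function.update_add_eq_add_single, dotProduct_add, dotProduct_single]

theorem exp_neg_mul_sum_le_sum_mul_exp {ι : Type*} (s : Finset ι) {w t : ι → ℝ} {c : ℝ}
    (hw : ∀ j ∈ s, 0 ≤ w j) (ht : ∀ j ∈ s, |t j| ≤ c) :
    exp (-c) * ∑ j ∈ s, w j ≤ ∑ j ∈ s, w j * exp (t j) := by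
  rw [mul_sum]
  refine sum_le_sum fun j hj => ?_
  rw [mul_comm]
  exact mul_le_mul_of_nonneg_left (exp_le_exp.2 (neg_le_of_abs_le (ht j hj))) (hw j hj)

theorem sum_mul_exp_le_exp_mul_sum {ι : Type*} (s : Finset ι) {w t : ι → ℝ} {c : ℝ}
    (hw : ∀ j ∈ s, 0 ≤ w j) (ht : ∀ j ∈ s, |t j| ≤ c) :
    ∑ j ∈ s, w j * exp (t j) ≤ exp c * ∑ j ∈ s, w j := by
  rw [mul_sum]
  refine sum_le_sum fun j hj => ?_
  rw [mul_comm (exp c)]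
  exact mul_le_mul_of_nonneg_left (exp_le_exp.2 (le_of_abs_le (ht j hj))) (hw j hj)

theorem abs_log_div_le_of_exp_neg_mul_le_of_le_exp_mul {N S c : ℝ} (hc : 0 ≤ c) (hS : 0 ≤ S)
    (hlower : exp (-c) * S ≤ N) (hupper : N ≤ exp c * S) : |log (N / S)| ≤ c := by
  rcases hS.eq_or_lt with rfl | hSpos
  -- `N / 0 = 0` and `log 0 = 0`
  · simpa using hc
  have hNpos : 0 < N := (mul_pos (exp_pos _) hSpos).trans_le hlower
  rw [log_div hNpos.ne' hSpos.ne', abs_le]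
  have hlog_lower := log_le_log (mul_pos (exp_pos _) hSpos) hlower
  have hlog_upper := log_le_log hNpos hupper
  rw [log_mul (exp_pos _).ne' hSpos.ne', log_exp] at hlog_lower hlog_upper
  constructor <;> linarith

theorem abs_log_sum_mul_exp_div_sum_le {ι : Type*} (s : Finset ι) {w t : ι → ℝ} {c : ℝ}
    (hc : 0 ≤ c) (hw : ∀ j ∈ s, 0 ≤ w j) (ht : ∀ j ∈ s, |t j| ≤ c) :
    |log ((∑ j ∈ s, w j * exp (t j)) / ∑ j ∈ s, w j)| ≤ c :=
  abs_log_div_le_of_exp_neg_mul_le_of_le_exp_mul hc (sum_nonneg hw)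
    (exp_neg_mul_sum_le_sum_mul_exp s hw ht) (sum_mul_exp_le_exp_mul_sum s hw ht)

theorem gradient_log_lipschitz_general
    (m n : ℕ) (μ : ℝ) (hμ : 0 < μ)
    (A : Matrix (Fin m) (Fin n) ℝ) (hA : ∀ j i, 0 ≤ A j i)
    (i : Fin n)
    (Anormi : ℝ) (hAnormi : IsGreatest {a : ℝ | ∃ j, A j i = a} Anormi)
    (x : Fin n → ℝ) (γ : ℝ) :
    |Real.log
        ((∑ j, A j i * Real.exp ((1 - ∑ k, A j k * Function.update x i (x i + γ) k) / μ)) /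
         (∑ j, A j i * Real.exp ((1 - ∑ k, A j k * x k) / μ)))|
      ≤ (Anormi / μ) * |γ| := by
  have hshift : ∀ j, A j i * exp ((1 - ∑ k, A j k * Function.update x i (x i + γ) k) / μ)
      = A j i * exp ((1 - ∑ k, A j k * x k) / μ) * exp (-(A j i * γ / μ)) := fun j => by
    rw [mul_assoc, ← exp_add]
    change _ * exp ((1 - A j ⬝ᵥ _) / μ) = _ * exp ((1 - A j ⬝ᵥ x) / μ + _)
    rw [dotProduct_update_add]
    ring_nf
  simp only [hshift]
  obtain ⟨⟨j₀, hj₀⟩, hAnormi_ub⟩ := hAnormi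
  refine abs_log_sum_mul_exp_div_sum_le _ ?_ (fun j _ => mul_nonneg (hA j i) (exp_pos _).le)
    fun j _ => ?_
  · exact mul_nonneg (div_nonneg (hj₀ ▸ hA j₀ i) hμ.le) (abs_nonneg γ)
  · rw [abs_neg, abs_div, abs_mul, abs_of_nonneg (hA j i), abs_of_pos hμ, div_mul_eq_mul_div]
    exact div_le_div_of_nonneg_right
      (mul_le_mul_of_nonneg_right (hAnormi_ub ⟨j, rfl⟩) (abs_nonneg γ)) hμ.le

/-- Local Lipschitz property of the gradient in logarithmic form: for all `x ≥ 0` and `γ`,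
`|log((1 − ∇_i f_μ(x + γe_i))/(1 − ∇_i f_μ(x)))| ≤ (‖A_{:i}‖_∞/μ)·|γ|`, where
`1 − ∇_i f_μ(y) = Σ_j A_{ji} exp((1 − (Ay)_j)/μ)`. -/
theorem gradient_log_lipschitz
    (m n : ℕ) (μ : ℝ) (hμ : 0 < μ)
    (A : Matrix (Fin m) (Fin n) ℝ) (hA : ∀ j i, 0 ≤ A j i)
    (i : Fin n) (hcoli : ∃ j, 0 < A j i)
    (Anormi : ℝ) (hAnormi : IsGreatest {a : ℝ | ∃ j, A j i = a} Anormi)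
    (x : Fin n → ℝ) (hx : ∀ k, 0 ≤ x k) (γ : ℝ) :
    |Real.log
        ((∑ j, A j i * Real.exp ((1 - ∑ k, A j k * Function.update x i (x i + γ) k) / μ)) /
         (∑ j, A j i * Real.exp ((1 - ∑ k, A j k * x k) / μ)))|
      ≤ (Anormi / μ) * |γ| :=
  gradient_log_lipschitz_general m n μ hμ A hA i Anormi hAnormi x γ
end

section
/- Let μ > 0, L = 4/μ, A ∈ ℝ_{≥0}^{m×n} with every column nonzero, and f_μ(x) = 𝟙ᵀx + μΣ_{j=1}^m exp((1 − (Ax)_j)/μ). Fix x ∈ Δ and i ∈ [n]. If ∇_i f_μ(x) ∈ (−1, 1), then for every γ ∈ ℝ with |γ| ≤ 1/(L·‖A_{:i}‖_∞), one has |∇_i f_μ(x) − ∇_i f_μ(x + γe_i)| ≤ L·‖A_{:i}‖_∞·|γ|, where e_i is the i-th standard basis vector. -/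
/-!
Moving from `x` to `x + γ eᵢ` multiplies each `p_j` by `exp (-A_{ji} γ / μ)`, and the step-size bound
gives `|A_{ji} γ / μ| ≤ ‖A_{:i}‖_∞ |γ| / μ ≤ 1/4`. Since `|eᵗ - 1| ≤ 2|t|` for `|t| ≤ 1`, the change of
`∇ᵢ f_μ` is at most `2 ‖A_{:i}‖_∞ |γ| / μ · Σⱼ A_{ji} p_j`, and `∇ᵢ f_μ(x) > -1` says exactly that
`Σⱼ A_{ji} p_j < 2`.
-/

open Finset Real

lemma sum_mul_update_add_self {ι R : Type*} [Fintype ι] [DecidableEq ι] [CommSemiring R]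
    (v x : ι → R) (i : ι) (γ : R) :
    ∑ k, v k * Function.update x i (x i + γ) k = ∑ k, v k * x k + v i * γ := by
  have hupdate : Function.update x i (x i + γ) = x + Pi.single i γ := by
    ext k
    rcases eq_or_ne k i with rfl | hk
    · simp
    · simp [hk]
  simp only [hupdate, Pi.add_apply, mul_add, sum_add_distrib]
  congr 1
  exact dotProduct_single v γ i

lemma sum_mul_exp_shift_sub_sum_mul_exp {ι : Type*} [Fintype ι] (w s : ι → ℝ) (γ μ : ℝ) :
    ∑ j, w j * exp ((1 - (s j + w j * γ)) / μ) - ∑ j, w j * exp ((1 - s j) / μ) =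
      ∑ j, w j * exp ((1 - s j) / μ) * (exp (-(w j * γ) / μ) - 1) := by
  rw [← sum_sub_distrib]
  refine sum_congr rfl fun j _ => ?_
  rw [show (1 - (s j + w j * γ)) / μ = (1 - s j) / μ + -(w j * γ) / μ by ring, exp_add]
  ring

lemma abs_sum_mul_exp_sub_one_le {ι : Type*} [Fintype ι] (a t : ι → ℝ) {c : ℝ}
    (ha : ∀ j, 0 ≤ a j) (ht : ∀ j, |t j| ≤ c) (hc : c ≤ 1) :
    |∑ j, a j * (exp (t j) - 1)| ≤ 2 * c * ∑ j, a j := by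
  rw [mul_sum]
  refine (abs_sum_le_sum_abs _ _).trans (sum_le_sum fun j _ => ?_)
  rw [abs_mul, abs_of_nonneg (ha j), mul_comm (2 * c)]
  refine mul_le_mul_of_nonneg_left ?_ (ha j)
  calc |exp (t j) - 1| ≤ 2 * |t j| := abs_exp_sub_one_le ((ht j).trans hc)
    _ ≤ 2 * c := by linarith [ht j]

lemma mul_le_one_div_of_le_one_div_mul {a g L : ℝ} (ha : 0 ≤ a) (hL : 0 < L)
    (hg : g ≤ 1 / (L * a)) : a * g ≤ 1 / L := by
  rcases ha.eq_or_lt with rfl | ha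
  · simpa using hL.le
  · calc a * g ≤ a * (1 / (L * a)) := by gcongr
      _ = 1 / L := by field_simp

theorem gradient_local_lipschitz_small_general
    (m n : ℕ) (μ L : ℝ) (hμ : 0 < μ) (hL : L = 4 / μ)
    (A : Matrix (Fin m) (Fin n) ℝ) (hA : ∀ j i, 0 ≤ A j i)
    (Anorm : Fin n → ℝ)
    (hAnorm : ∀ i, IsGreatest {a : ℝ | ∃ j, A j i = a} (Anorm i))
    (x : Fin n → ℝ)
    (i : Fin n)
    (h1 : -1 < 1 - ∑ j, A j i * Real.exp ((1 - ∑ k, A j k * x k) / μ))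
    (γ : ℝ) (hγ : |γ| ≤ 1 / (L * Anorm i)) :
    |(1 - ∑ j, A j i * Real.exp ((1 - ∑ k, A j k * x k) / μ)) -
     (1 - ∑ j, A j i * Real.exp ((1 - ∑ k, A j k * Function.update x i (x i + γ) k) / μ))|
      ≤ L * Anorm i * |γ| := by
  have hA_le : ∀ j, A j i ≤ Anorm i := fun j => (hAnorm i).2 ⟨j, rfl⟩
  have hAnorm_nonneg : 0 ≤ Anorm i := by
    obtain ⟨j, hj⟩ := (hAnorm i).1
    exact hj ▸ hA j i
  have hstep : Anorm i * |γ| ≤ μ / 4 := by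
    simpa [hL] using mul_le_one_div_of_le_one_div_mul hAnorm_nonneg (by rw [hL]; positivity) hγ
  have hc : Anorm i * |γ| / μ ≤ 1 := by
    rw [div_le_one hμ]
    linarith
  have ht : ∀ j, |-(A j i * γ) / μ| ≤ Anorm i * |γ| / μ := fun j => by
    rw [abs_div, abs_neg, abs_mul, abs_of_nonneg (hA j i), abs_of_pos hμ]
    gcongr
    exact hA_le j
  simp only [sum_mul_update_add_self, sub_sub_sub_cancel_left,
    sum_mul_exp_shift_sub_sum_mul_exp]
  calc _ ≤ 2 * (Anorm i * |γ| / μ) * ∑ j, A j i * exp ((1 - ∑ k, A j k * x k) / μ) :=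
        abs_sum_mul_exp_sub_one_le _ _ (fun j => mul_nonneg (hA j i) (exp_pos _).le) ht hc
    _ ≤ 2 * (Anorm i * |γ| / μ) * 2 := by gcongr; linarith
    _ = L * Anorm i * |γ| := by rw [hL]; field_simp; ring

/-- Coordinate-wise local Lipschitz continuity of the gradient (small-gradient case):
if `∇_i f_μ(x) ∈ (−1,1)` and `|γ| ≤ 1/(L‖A_{:i}‖_∞)`, then
`|∇_i f_μ(x) − ∇_i f_μ(x + γe_i)| ≤ L‖A_{:i}‖_∞|γ|`. -/
theorem gradient_local_lipschitz_small
    (m n : ℕ) (μ L : ℝ) (hμ : 0 < μ) (hL : L = 4 / μ)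
    (A : Matrix (Fin m) (Fin n) ℝ) (hA : ∀ j i, 0 ≤ A j i)
    (hcol : ∀ i, ∃ j, 0 < A j i)
    (Anorm : Fin n → ℝ)
    (hAnorm : ∀ i, IsGreatest {a : ℝ | ∃ j, A j i = a} (Anorm i))
    (x : Fin n → ℝ) (hx : ∀ k, 0 ≤ x k ∧ x k ≤ 3 / Anorm k)
    (i : Fin n)
    (h1 : -1 < 1 - ∑ j, A j i * Real.exp ((1 - ∑ k, A j k * x k) / μ))
    (h2 : 1 - ∑ j, A j i * Real.exp ((1 - ∑ k, A j k * x k) / μ) < 1)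
    (γ : ℝ) (hγ : |γ| ≤ 1 / (L * Anorm i)) :
    |(1 - ∑ j, A j i * Real.exp ((1 - ∑ k, A j k * x k) / μ)) -
     (1 - ∑ j, A j i * Real.exp ((1 - ∑ k, A j k * Function.update x i (x i + γ) k) / μ))|
      ≤ L * Anorm i * |γ| :=
  gradient_local_lipschitz_small_general m n μ L hμ hL A hA Anorm hAnorm x i h1 γ hγ
end

section
/- Let w ∈ ℝⁿ with w_i > 0 for all i, and for x, y ∈ ℝⁿ define V_x(y) = ½·Σ_i w_i(x_i − y_i)². Let Δ ⊆ ℝⁿ be a nonempty closed convex set, let z̄ ∈ Δ, u ∈ Δ, ξ ∈ ℝⁿ, and let a > 0, L > 0 be scalars. Let z′ be the minimizer over Δ of z ↦ V_{z̄}(z) + ⟨z, a·ξ⟩, and for any x ∈ ℝⁿ set y = x + (1/(aL))·(z′ − z̄). Then ⟨a·ξ, z̄ − u⟩ ≤ a²L·⟨ξ, x − y⟩ + V_{z̄}(u) − V_{z′}(u). -/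
/-!
Since `Δ` is convex, `z' + t (u - z')` stays in `Δ` for `t ∈ [0, 1]`, and along this segment the
objective is a quadratic polynomial in `t` minimised at `t = 0`; hence its slope at `0` is
nonnegative, which is the first-order optimality condition
`⟨w ⊙ (z' - z̄) + aξ, u - z'⟩ ≥ 0`. The three-point identity of the Bregman divergence turns
`⟨w ⊙ (z' - z̄), u - z'⟩` into `V_{z̄}(u) - V_{z'}(u) - V_{z̄}(z')`, and the choice of `y` makes
`a²L ⟨ξ, x - y⟩ = ⟨aξ, z̄ - z'⟩`. What is left over is `V_{z̄}(z') ≥ 0`.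
-/

open Finset Filter Topology

namespace MirrorDescent

variable {ι : Type*} [Fintype ι]

noncomputable def bregman (w x y : ι → ℝ) : ℝ := (1 / 2) * ∑ i, w i * (x i - y i) ^ 2

lemma bregman_nonneg {w : ι → ℝ} (hw : ∀ i, 0 ≤ w i) (x y : ι → ℝ) : 0 ≤ bregman w x y :=
  mul_nonneg (by norm_num) (sum_nonneg fun i _ => mul_nonneg (hw i) (sq_nonneg _))

lemma bregman_three_point (w c z u : ι → ℝ) :
    ∑ i, w i * (z i - c i) * (u i - z i) = bregman w c u - bregman w z u - bregman w c z := by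
  simp only [bregman, mul_sum, ← sum_sub_distrib]
  exact sum_congr rfl fun i _ => by ring

lemma bregman_add_linear_add_smul (w c g z d : ι → ℝ) (t : ℝ) :
    bregman w c (z + t • d) + ∑ i, (z + t • d) i * g i
      = bregman w c z + ∑ i, z i * g i
        + (t * ∑ i, d i * (w i * (z i - c i) + g i) + t ^ 2 * bregman w d 0) := by
  simp only [bregman, Pi.add_apply, Pi.smul_apply, Pi.zero_apply, smul_eq_mul, mul_sum,
    ← sum_add_distrib]
  exact sum_congr rfl fun i _ => by ring

lemma nonneg_of_forall_mul_add_sq_mul_nonneg {G H : ℝ}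
    (h : ∀ t : ℝ, 0 < t → t ≤ 1 → 0 ≤ t * G + t ^ 2 * H) : 0 ≤ G := by
  have hcont : Continuous fun t : ℝ => G + t * H := by fun_prop
  have hlim : Tendsto (fun t : ℝ => G + t * H) (𝓝[>] 0) (𝓝 G) :=
    (hcont.tendsto' 0 G (by simp)).mono_left nhdsWithin_le_nhds
  refine ge_of_tendsto hlim ?_
  filter_upwards [Ioc_mem_nhdsGT (zero_lt_one' ℝ)] with t ⟨ht0, ht1⟩
  nlinarith [h t ht0 ht1]

lemma sum_sub_mul_gradient_nonneg_of_isMinOn {w c g z u : ι → ℝ} {Δ : Set (ι → ℝ)}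
    (hΔ : Convex ℝ Δ) (hz : z ∈ Δ) (hu : u ∈ Δ)
    (hmin : IsMinOn (fun v => bregman w c v + ∑ i, v i * g i) Δ z) :
    0 ≤ ∑ i, (u i - z i) * (w i * (z i - c i) + g i) := by
  refine nonneg_of_forall_mul_add_sq_mul_nonneg (H := bregman w (u - z) 0) fun t ht0 ht1 => ?_
  have hle := isMinOn_iff.mp hmin _ (hΔ.add_smul_sub_mem hz hu ⟨ht0.le, ht1⟩)
  rw [bregman_add_linear_add_smul] at hle
  exact le_add_iff_nonneg_right _ |>.mp hle

end MirrorDescent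

open MirrorDescent

theorem mirror_descent_step_general
    (n : ℕ) (w : Fin n → ℝ) (hw : ∀ i, 0 < w i)
    (Δ : Set (Fin n → ℝ)) (hΔconv : Convex ℝ Δ)
    (zbar : Fin n → ℝ)
    (u : Fin n → ℝ) (hu : u ∈ Δ)
    (ξ : Fin n → ℝ) (a L : ℝ) (ha : 0 < a) (hL : 0 < L)
    (z' : Fin n → ℝ) (hz'mem : z' ∈ Δ)
    (hz' : IsMinOn (fun z : Fin n → ℝ =>
        (1/2) * ∑ i, w i * (zbar i - z i)^2 + ∑ i, z i * (a * ξ i)) Δ z')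
    (x y : Fin n → ℝ) (hy : y = x + (1 / (a * L)) • (z' - zbar)) :
    ∑ i, (a * ξ i) * (zbar i - u i)
      ≤ a^2 * L * (∑ i, ξ i * (x i - y i))
        + (1/2) * ∑ i, w i * (zbar i - u i)^2
        - (1/2) * ∑ i, w i * (z' i - u i)^2 := by
  have hopt := sum_sub_mul_gradient_nonneg_of_isMinOn hΔconv hz'mem hu hz'
  have hthree := bregman_three_point w zbar z' u
  have hpos := bregman_nonneg (fun i => (hw i).le) zbar z'
  have haL : a * L ≠ 0 := by positivity
  have hstep : a ^ 2 * L * ∑ i, ξ i * (x i - y i) = ∑ i, a * ξ i * (zbar i - z' i) := by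
    simp only [hy, mul_sum, Pi.add_apply, Pi.smul_apply, Pi.sub_apply, smul_eq_mul]
    refine sum_congr rfl fun i _ => ?_
    field_simp
    ring
  have hsplit : ∑ i, a * ξ i * (zbar i - u i)
      = ∑ i, a * ξ i * (zbar i - z' i) + ∑ i, w i * (z' i - zbar i) * (u i - z' i)
        - ∑ i, (u i - z' i) * (w i * (z' i - zbar i) + a * ξ i) := by
    simp only [← sum_add_distrib, ← sum_sub_distrib]
    exact sum_congr rfl fun i _ => by ring
  rw [hstep, hsplit, hthree]
  unfold bregman at hpos ⊢
  linarith

/-- Mirror descent step guarantee: if `z′` minimizes `z ↦ V_{z̄}(z) + ⟨z, aξ⟩` over the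
closed convex set `Δ` and `y = x + (1/(aL))(z′ − z̄)`, then
`⟨aξ, z̄ − u⟩ ≤ a²L⟨ξ, x − y⟩ + V_{z̄}(u) − V_{z′}(u)`. -/
theorem mirror_descent_step
    (n : ℕ) (w : Fin n → ℝ) (hw : ∀ i, 0 < w i)
    (Δ : Set (Fin n → ℝ)) (hΔne : Δ.Nonempty) (hΔcl : IsClosed Δ) (hΔconv : Convex ℝ Δ)
    (zbar : Fin n → ℝ) (hzbar : zbar ∈ Δ)
    (u : Fin n → ℝ) (hu : u ∈ Δ)
    (ξ : Fin n → ℝ) (a L : ℝ) (ha : 0 < a) (hL : 0 < L)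
    (z' : Fin n → ℝ) (hz'mem : z' ∈ Δ)
    (hz' : IsMinOn (fun z : Fin n → ℝ =>
        (1/2) * ∑ i, w i * (zbar i - z i)^2 + ∑ i, z i * (a * ξ i)) Δ z')
    (x y : Fin n → ℝ) (hy : y = x + (1 / (a * L)) • (z' - zbar)) :
    ∑ i, (a * ξ i) * (zbar i - u i)
      ≤ a^2 * L * (∑ i, ξ i * (x i - y i))
        + (1/2) * ∑ i, w i * (zbar i - u i)^2
        - (1/2) * ∑ i, w i * (z' i - u i)^2 :=
  mirror_descent_step_general n w hw Δ hΔconv zbar u hu ξ a L ha hL z' hz'mem hz' x y hy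
end

section
/- Let Δ ⊆ ℝⁿ be a convex set, let τ ∈ (0, 1), c > 0, and define step sizes α_0 = 1/c and α_k = α_{k−1}/(1 − τ) for k ≥ 1. Let (x_k), (y_k), (z_k) be sequences in ℝⁿ with x_0 = y_0 = z_0 ∈ Δ, z_k ∈ Δ for all k ≥ 0, and satisfying the recurrences x_k = τ·z_{k−1} + (1 − τ)·y_{k−1} and y_k = x_k + (1/(c·α_k))·(z_k − z_{k−1}) for all k ≥ 1. Then x_k ∈ Δ and y_k ∈ Δ for all k ≥ 0; in fact each y_k is a convex combination of z_0, z_1, …, z_k. -/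
/-!
Since `α_k = 1 / (c (1-τ)^k)`, the update reads
`y_{k+1} = (1-τ) y_k + (τ - (1-τ)^{k+1}) z_k + (1-τ)^{k+1} z_{k+1}`.
Unrolling it gives `y_k = (1-τ)^k z_k + ∑_{l<k} τ (1-τ)^{k-1-l} z_l`, whose weights are
nonnegative and sum to `(1-τ)^k + (1 - (1-τ)^k) = 1`. Then `y_k ∈ Δ` by convexity, and so is
`x_{k+1}`, a convex combination of `z_k` and `y_k`.
-/

open Finset

noncomputable def accWeight (τ : ℝ) (k l : ℕ) : ℝ :=
  if l < k then τ * (1 - τ) ^ (k - 1 - l) else if l = k then (1 - τ) ^ k else 0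

lemma accWeight_nonneg {τ : ℝ} (hτ0 : 0 ≤ τ) (hτ1 : τ ≤ 1) (k l : ℕ) :
    0 ≤ accWeight τ k l := by
  have : 0 ≤ 1 - τ := by linarith
  unfold accWeight
  split_ifs <;> positivity

lemma accWeight_self (τ : ℝ) (k : ℕ) : accWeight τ k k = (1 - τ) ^ k := by
  simp [accWeight]

lemma accWeight_succ_of_lt_succ (τ : ℝ) {k l : ℕ} (hl : l < k + 1) :
    accWeight τ (k + 1) l
      = (1 - τ) * accWeight τ k l + if l = k then τ - (1 - τ) ^ (k + 1) else 0 := by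
  rcases (Nat.lt_succ_iff.mp hl).eq_or_lt with rfl | hlk
  · simp only [accWeight, lt_add_iff_pos_right, Order.lt_one_iff, ↓reduceIte,
      add_tsub_cancel_right, tsub_self, pow_zero, mul_one, lt_self_iff_false]
    ring
  · have hexp : k - l = k - 1 - l + 1 := by omega
    simp only [accWeight, hl, hlk, hlk.ne, ↓reduceIte, add_tsub_cancel_right, hexp, pow_succ,
      add_zero]
    ring

lemma sum_accWeight_smul_succ {M : Type*} [AddCommMonoid M] [Module ℝ M]
    (τ : ℝ) (f : ℕ → M) (k : ℕ) :
    ∑ l ∈ range (k + 2), accWeight τ (k + 1) l • f l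
      = (1 - τ) • ∑ l ∈ range (k + 1), accWeight τ k l • f l
        + (τ - (1 - τ) ^ (k + 1)) • f k + (1 - τ) ^ (k + 1) • f (k + 1) := by
  have hsplit : ∀ l ∈ range (k + 1), accWeight τ (k + 1) l • f l
      = (1 - τ) • accWeight τ k l • f l
        + if l = k then (τ - (1 - τ) ^ (k + 1)) • f l else 0 := by
    intro l hl
    rw [accWeight_succ_of_lt_succ τ (mem_range.mp hl), add_smul, mul_smul, ite_smul, zero_smul]
  rw [sum_range_succ, accWeight_self, sum_congr rfl hsplit, sum_add_distrib, ← smul_sum,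
    sum_ite_eq' _ _ _, if_pos (self_mem_range_succ k)]

lemma sum_accWeight (τ : ℝ) (k : ℕ) : ∑ l ∈ range (k + 1), accWeight τ k l = 1 := by
  induction k with
  | zero => simp [accWeight]
  | succ k ih =>
    have h := sum_accWeight_smul_succ τ (fun _ => (1 : ℝ)) k
    simp only [smul_eq_mul, mul_one] at h
    rw [h, ih]
    ring

lemma eq_sum_accWeight_smul {E : Type*} [AddCommGroup E] [Module ℝ E] {τ : ℝ}
    {y z : ℕ → E} (h0 : y 0 = z 0)
    (hsucc : ∀ k, y (k + 1) = τ • z k + (1 - τ) • y k + (1 - τ) ^ (k + 1) • (z (k + 1) - z k))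
    (k : ℕ) : y k = ∑ l ∈ range (k + 1), accWeight τ k l • z l := by
  induction k with
  | zero => simp [accWeight, h0]
  | succ k ih =>
    rw [sum_accWeight_smul_succ, ← ih, hsucc]
    module

lemma one_div_mul_eq_pow {τ c : ℝ} (hτ : τ ≠ 1) (hc : c ≠ 0) {α : ℕ → ℝ}
    (hα0 : α 0 = 1 / c) (hα : ∀ k, α (k + 1) = α k / (1 - τ)) (k : ℕ) :
    1 / (c * α k) = (1 - τ) ^ k := by
  have hτ' : 1 - τ ≠ 0 := sub_ne_zero.mpr hτ.symm
  have hαk : α k = 1 / (c * (1 - τ) ^ k) := by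
    induction k with
    | zero => simp [hα0]
    | succ k ih =>
      rw [hα, ih, pow_succ]
      field_simp
  rw [hαk]
  field_simp

/-- Feasibility invariant of the accelerated coordinate descent iterates: with
`x_k = τz_{k−1} + (1−τ)y_{k−1}` and `y_k = x_k + (1/(cα_k))(z_k − z_{k−1})`, all iterates
`x_k, y_k` stay in the convex set `Δ`; in fact each `y_k` is a convex combination of
`z_0, …, z_k`. -/
theorem iterates_feasible
    (n : ℕ) (Δ : Set (Fin n → ℝ)) (hΔconv : Convex ℝ Δ)
    (τ : ℝ) (hτ0 : 0 < τ) (hτ1 : τ < 1)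
    (c : ℝ) (hc : 0 < c)
    (α : ℕ → ℝ) (hα0 : α 0 = 1 / c) (hα : ∀ k, α (k + 1) = α k / (1 - τ))
    (x y z : ℕ → Fin n → ℝ)
    (hxy0 : x 0 = y 0) (hyz0 : y 0 = z 0)
    (hzΔ : ∀ k, z k ∈ Δ)
    (hx : ∀ k, x (k + 1) = τ • z k + (1 - τ) • y k)
    (hy : ∀ k, y (k + 1) = x (k + 1) + (1 / (c * α (k + 1))) • (z (k + 1) - z k)) :
    (∀ k, x k ∈ Δ ∧ y k ∈ Δ) ∧
    (∀ k, ∃ coeff : ℕ → ℝ, (∀ l, 0 ≤ coeff l) ∧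
      (∑ l ∈ Finset.range (k + 1), coeff l) = 1 ∧
      y k = ∑ l ∈ Finset.range (k + 1), coeff l • z l) := by
  have hweight := accWeight_nonneg hτ0.le hτ1.le
  have hyz : ∀ k, y k = ∑ l ∈ range (k + 1), accWeight τ k l • z l := by
    refine eq_sum_accWeight_smul hyz0 fun k => ?_
    rw [hy, hx, one_div_mul_eq_pow hτ1.ne hc.ne' hα0 hα]
  have hyΔ : ∀ k, y k ∈ Δ := fun k => hyz k ▸
    hΔconv.sum_mem (fun l _ => hweight k l) (sum_accWeight τ k) (fun l _ => hzΔ l)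
  refine ⟨fun k => ⟨?_, hyΔ k⟩, fun k => ⟨accWeight τ k, hweight k, sum_accWeight τ k, hyz k⟩⟩
  cases k with
  | zero => exact hxy0 ▸ hyΔ 0
  | succ k => exact hx k ▸ hΔconv (hzΔ k) (hyΔ k) hτ0.le (by linarith) (by ring)
end

section
/- Let μ > 0, L = 4/μ, A ∈ ℝ_{≥0}^{m×n} with every column nonzero, f_μ(x) = 𝟙ᵀx + μΣ_{j=1}^m exp((1 − (Ax)_j)/μ), and let V_x(y) = ½Σ_j ‖A_{:j}‖_∞(x_j − y_j)². Fix x ∈ Δ, z̄ ∈ Δ, u ∈ Δ, i ∈ [n], and a scalar a with 0 < a ≤ 1. Write g = ∇_i f_μ(x), let ξ = max(g, −1) be the truncated gradient and η = g − ξ ≤ 0 the large component. Let z′ be the minimizer over Δ of z ↦ V_{z̄}(z) + a·ξ·z_i, and let y = x + (1/(aL))·(z′ − z̄). Then a·η·(z̄_i − u_i) + a²L·ξ·(x_i − y_i) ≤ 8aL·(f_μ(x) − f_μ(y)). -/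
/-!
Optimality of `z'` against coordinate updates of `z̄` shows that the proximal step moves only
coordinate `i`, by `t = aLδ` with `‖A_{:i}‖_∞ |t| ≤ 2a`, so `y = x + δ eᵢ`. Along this step every
exponent changes by at most `1`, where `e^{-v} ≤ 1 - v + 3v²/4`, whence
`f_μ(x) - f_μ(y) ≥ -gδ - (3L/16) ‖A_{:i}‖_∞ (1 - g) δ²`.
If `g ≥ -1`, then `η = 0` and comparing `z'` with `z̄` gives `L ‖A_{:i}‖_∞ δ² ≤ -2ξδ`, so a quarter
of the first-order decrease `-ξδ` survives. If `g < -1`, then `ξ = -1`, the step is at least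
`min(a/‖A_{:i}‖_∞, 3/‖A_{:i}‖_∞ - z̄ᵢ)`, hence `a(uᵢ - z̄ᵢ) ≤ 3t`, and the regret is paid for by the
part `-η δ` of the decrease `(1 - g) δ - δ`.
-/

open Real Finset Matrix

noncomputable section

-- The constant `3 / 4`, sharper than the `1` of `Real.abs_exp_sub_one_sub_id_le`, is what leaves
-- a quarter of the first-order decrease in the case `g ≥ -1`.
lemma exp_neg_le_one_sub_add_sq {v : ℝ} (hv : |v| ≤ 1) :
    exp (-v) ≤ 1 - v + 3 / 4 * v ^ 2 := by
  have h := Real.exp_bound (x := -v) (by rwa [abs_neg]) (n := 2) two_pos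
  norm_num [Finset.sum_range_succ] at h
  linarith [(abs_le.mp h).2]

lemma le_mul_one_sub_exp_neg {p α w δ μ : ℝ} (hμ : 0 < μ) (hp : 0 ≤ p) (hα : 0 ≤ α)
    (hαw : α ≤ w) (hδ : w * |δ| ≤ μ) :
    α * p * δ - 3 / 4 * (w / μ) * (α * p) * δ ^ 2 ≤ μ * (p * (1 - exp (-(α * δ / μ)))) := by
  have hv : |α * δ / μ| ≤ 1 := by
    rw [abs_div, abs_of_pos hμ, div_le_one hμ, abs_mul, abs_of_nonneg hα]
    exact (mul_le_mul_of_nonneg_right hαw (abs_nonneg δ)).trans hδ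
  have hsq : α * (α * δ ^ 2) ≤ w * (α * δ ^ 2) :=
    mul_le_mul_of_nonneg_right hαw (mul_nonneg hα (sq_nonneg δ))
  have hexpand : μ * (p * (α * δ / μ - 3 / 4 * (α * δ / μ) ^ 2)) =
      α * p * δ - 3 / 4 * (p / μ) * (α * (α * δ ^ 2)) := by
    field_simp
  calc _ ≤ μ * (p * (α * δ / μ - 3 / 4 * (α * δ / μ) ^ 2)) := by
        rw [hexpand]
        linear_combination (3 / 4) * mul_le_mul_of_nonneg_left hsq (div_nonneg hp hμ.le)
    _ ≤ _ := by gcongr ?_ * (_ * ?_); linarith [exp_neg_le_one_sub_add_sq hv]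

section SmoothedCover

variable {ι κ : Type*} [Fintype ι]

def coverPotential (μ : ℝ) (A : Matrix κ ι ℝ) (x : ι → ℝ) (j : κ) : ℝ :=
  exp ((1 - (A *ᵥ x) j) / μ)

lemma coverPotential_add_single [DecidableEq ι] (μ : ℝ) (A : Matrix κ ι ℝ) (x : ι → ℝ) (i : ι)
    (δ : ℝ) (j : κ) :
    coverPotential μ A (x + Pi.single i δ) j =
      coverPotential μ A x j * exp (-(A j i * δ / μ)) := by
  simp only [coverPotential, mulVec_add, mulVec_single, op_smul_eq_smul, Pi.add_apply,
    Pi.smul_apply, col_apply, smul_eq_mul, ← exp_add]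
  ring_nf

variable [Fintype κ]

def smoothedCover (μ : ℝ) (A : Matrix κ ι ℝ) (x : ι → ℝ) : ℝ :=
  ∑ k, x k + μ * ∑ j, coverPotential μ A x j

def smoothedCoverGrad (μ : ℝ) (A : Matrix κ ι ℝ) (x : ι → ℝ) (i : ι) : ℝ :=
  1 - ∑ j, A j i * coverPotential μ A x j

lemma smoothedCoverGrad_le_one {μ : ℝ} {A : Matrix κ ι ℝ} (x : ι → ℝ) {i : ι}
    (hA : ∀ j, 0 ≤ A j i) : smoothedCoverGrad μ A x i ≤ 1 :=
  sub_le_self _ (sum_nonneg fun j _ => mul_nonneg (hA j) (exp_pos _).le)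

variable [DecidableEq ι] (μ : ℝ) (A : Matrix κ ι ℝ) (x : ι → ℝ) (i : ι) (δ : ℝ)

lemma smoothedCover_sub_add_single :
    smoothedCover μ A x - smoothedCover μ A (x + Pi.single i δ) =
      -δ + μ * ∑ j, coverPotential μ A x j * (1 - exp (-(A j i * δ / μ))) := by
  simp only [smoothedCover, coverPotential_add_single, Pi.add_apply, sum_add_distrib,
    sum_pi_single', mem_univ, if_true, mul_one_sub, sum_sub_distrib]
  ring

variable {μ A} in
lemma le_smoothedCover_sub_add_single {w : ℝ} (hμ : 0 < μ) (hA : ∀ j, 0 ≤ A j i)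
    (hAw : ∀ j, A j i ≤ w) (hδ : w * |δ| ≤ μ) :
    -smoothedCoverGrad μ A x i * δ -
        3 / 4 * (w / μ) * (1 - smoothedCoverGrad μ A x i) * δ ^ 2 ≤
      smoothedCover μ A x - smoothedCover μ A (x + Pi.single i δ) := by
  rw [smoothedCover_sub_add_single, smoothedCoverGrad, sub_sub_cancel]
  calc _ = -δ + ∑ j, (A j i * coverPotential μ A x j * δ -
          3 / 4 * (w / μ) * (A j i * coverPotential μ A x j) * δ ^ 2) := by
        simp only [sum_sub_distrib, ← sum_mul, ← mul_sum]; ring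
    _ ≤ _ := by
        rw [mul_sum]
        gcongr with j
        exact le_mul_one_sub_exp_neg hμ (exp_pos _).le (hA j) (hAw j) hδ

end SmoothedCover

section Prox

variable {ι : Type*} [DecidableEq ι]

lemma update_mem_box {zbar b : ι → ℝ} {i : ι} (hzbar : ∀ k, 0 ≤ zbar k ∧ zbar k ≤ b k) {s : ℝ}
    (hs : s ∈ Set.Icc 0 (b i)) :
    ∀ k, 0 ≤ Function.update zbar i s k ∧ Function.update zbar i s k ≤ b k :=
  (Function.forall_update_iff zbar fun k r => 0 ≤ r ∧ r ≤ b k).mpr ⟨hs, fun k _ => hzbar k⟩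

variable [Fintype ι] (w zbar : ι → ℝ) (c : ℝ) (i : ι)

def proxObjective (z : ι → ℝ) : ℝ :=
  1 / 2 * ∑ k, w k * (zbar k - z k) ^ 2 + c * z i

lemma proxObjective_eq (z : ι → ℝ) :
    proxObjective w zbar c i z = 1 / 2 * (w i * (zbar i - z i) ^ 2) + c * z i +
      1 / 2 * ∑ k ∈ univ.erase i, w k * (zbar k - z k) ^ 2 := by
  rw [proxObjective, ← add_sum_erase _ _ (mem_univ i)]
  ring

lemma proxObjective_update (s : ℝ) :
    proxObjective w zbar c i (Function.update zbar i s) =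
      1 / 2 * (w i * (zbar i - s) ^ 2) + c * s := by
  rw [proxObjective_eq, Function.update_self,
    sum_eq_zero fun k hk => by rw [Function.update_of_ne (ne_of_mem_erase hk), sub_self]; ring]
  ring

variable {w zbar c i} {b : ι → ℝ}

lemma sub_eq_single_of_isMinOn_proxObjective (hw : ∀ k, 0 < w k)
    (hzbar : ∀ k, 0 ≤ zbar k ∧ zbar k ≤ b k) {z : ι → ℝ} (hz : ∀ k, 0 ≤ z k ∧ z k ≤ b k)
    (hmin : IsMinOn (proxObjective w zbar c i) {z | ∀ k, 0 ≤ z k ∧ z k ≤ b k} z) :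
    z - zbar = Pi.single i (z i - zbar i) := by
  have hle := isMinOn_iff.mp hmin _ (update_mem_box hzbar (hz i))
  rw [proxObjective_update, proxObjective_eq] at hle
  have hterm : ∀ k, 0 ≤ w k * (zbar k - z k) ^ 2 := fun k => mul_nonneg (hw k).le (sq_nonneg _)
  have hzero := (sum_eq_zero_iff_of_nonneg fun k _ => hterm k).mp
    (le_antisymm (by linarith) (sum_nonneg fun k _ => hterm k))
  ext k
  rcases eq_or_ne k i with rfl | hk
  · simp
  have := hzero k (mem_erase.mpr ⟨hk, mem_univ k⟩)
  rw [mul_eq_zero, sq_eq_zero_iff, sub_eq_zero] at this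
  simp [hk, (this.resolve_left (hw k).ne').symm]

lemma isMinOn_proxObjective_coord (hw : ∀ k, 0 ≤ w k)
    (hzbar : ∀ k, 0 ≤ zbar k ∧ zbar k ≤ b k) {z : ι → ℝ}
    (hmin : IsMinOn (proxObjective w zbar c i) {z | ∀ k, 0 ≤ z k ∧ z k ≤ b k} z) :
    IsMinOn (fun s => 1 / 2 * (w i * (zbar i - s) ^ 2) + c * s) (Set.Icc 0 (b i)) (z i) := by
  refine isMinOn_iff.mpr fun s hs => ?_
  have hle := isMinOn_iff.mp hmin _ (update_mem_box hzbar hs)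
  rw [proxObjective_update, proxObjective_eq] at hle
  have : 0 ≤ ∑ k ∈ univ.erase i, w k * (zbar k - z k) ^ 2 :=
    sum_nonneg fun k _ => mul_nonneg (hw k) (sq_nonneg _)
  linarith

end Prox

section ProxStep

variable {w zbar c b z : ℝ}

lemma sq_add_nonpos_of_isMinOn (hzbar : zbar ∈ Set.Icc 0 b)
    (hmin : IsMinOn (fun s => 1 / 2 * (w * (zbar - s) ^ 2) + c * s) (Set.Icc 0 b) z) :
    w * (z - zbar) ^ 2 + 2 * c * (z - zbar) ≤ 0 := by
  have := isMinOn_iff.mp hmin _ hzbar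
  simp only [sub_self] at this
  linarith [show (zbar - z) ^ 2 = (z - zbar) ^ 2 by ring]

lemma mul_abs_le_of_sq_add_le {t : ℝ} (h : w * t ^ 2 + 2 * c * t ≤ 0) : w * |t| ≤ 2 * |c| := by
  rcases eq_or_ne t 0 with rfl | ht
  · simp
  have hpos : 0 < |t| := abs_pos.mpr ht
  have : w * |t| * |t| ≤ 2 * |c| * |t| := by
    rw [mul_assoc, abs_mul_abs_self]
    linarith [neg_abs_le (c * t), abs_mul c t]
  exact le_of_mul_le_mul_right this hpos

lemma mul_sub_le_of_isMinOn {a u : ℝ} (hw : 0 < w) (ha0 : 0 < a) (ha1 : a ≤ 1)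
    (hzbar : zbar ∈ Set.Icc 0 (3 / w)) (hu : u ∈ Set.Icc 0 (3 / w))
    (hmin : IsMinOn (fun s => 1 / 2 * (w * (zbar - s) ^ 2) + -a * s) (Set.Icc 0 (3 / w)) z) :
    a * (u - zbar) ≤ 3 * (z - zbar) := by
  set t₀ := min (a / w) (3 / w - zbar)
  have ht₀ : 0 ≤ t₀ := le_min (div_pos ha0 hw).le (by linarith [hzbar.2])
  have hwt₀ : w * t₀ ≤ a := by
    calc w * t₀ ≤ w * (a / w) := mul_le_mul_of_nonneg_left (min_le_left _ _) hw.le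
      _ = a := mul_div_cancel₀ a hw.ne'
  have hle := isMinOn_iff.mp hmin _ (show zbar + t₀ ∈ Set.Icc 0 (3 / w) from
    ⟨by linarith [hzbar.1], by linarith [min_le_right (a / w) (3 / w - zbar)]⟩)
  -- A step shorter than `t₀` could be lengthened towards `t₀` and lower the objective.
  have hstep : t₀ ≤ z - zbar := by
    by_contra! hlt
    nlinarith [mul_lt_mul_of_pos_left hlt hw]
  have hregret : a * (u - zbar) ≤ 3 * t₀ := by
    rw [mul_min_of_nonneg _ _ (by norm_num : (0 : ℝ) ≤ 3)]
    refine le_min ?_ ?_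
    · have : a * (3 / w) = 3 * (a / w) := by ring
      linarith [mul_le_mul_of_nonneg_left hu.2 ha0.le, mul_nonneg ha0.le hzbar.1]
    · nlinarith [hu.2, hzbar.2]
  linarith

end ProxStep

section Coupling

variable {a μ L w g ξ η δ t D r : ℝ}

lemma mul_abs_div_le (ha0 : 0 < a) (hμ : 0 < μ) (hL : L = 4 / μ) (hstep : w * |t| ≤ 2 * a) :
    w * |t / (a * L)| ≤ μ := by
  have haL : 0 < a * L := mul_pos ha0 (hL ▸ div_pos four_pos hμ)
  have : μ * (a * L) = 4 * a := by rw [hL]; field_simp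
  rw [abs_div, abs_of_pos haL, mul_div_assoc', div_le_iff₀ haL]
  linarith

lemma coupling_le_of_small_gradient (ha0 : 0 < a) (ha1 : a ≤ 1) (hμ : 0 < μ) (hL : L = 4 / μ)
    (hw : 0 ≤ w) (hξ : -1 ≤ ξ) (hg : g = ξ)
    (hquad : w * t ^ 2 + 2 * (a * ξ) * t ≤ 0) (ht : t = a * L * δ)
    (hD : -g * δ - 3 / 4 * (w / μ) * (1 - g) * δ ^ 2 ≤ D) :
    a ^ 2 * L * ξ * -δ ≤ 8 * a * L * D := by
  have hL0 : 0 < L := hL ▸ div_pos four_pos hμ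
  have hwμ : w / μ = w * L / 4 := by rw [hL]; field_simp
  have hquad' : w * L * δ ^ 2 + 2 * ξ * δ ≤ 0 := by
    have : a ^ 2 * L * (w * L * δ ^ 2 + 2 * ξ * δ) ≤ 0 := by rw [ht] at hquad; linarith
    exact nonpos_of_mul_nonpos_right this (by positivity)
  have hwLδ : 0 ≤ w * L * δ ^ 2 := by positivity
  have hD' : -(ξ * δ) / 4 ≤ D := by
    rw [hwμ, hg] at hD
    linarith [mul_nonneg (by linarith : 0 ≤ 1 + ξ) hwLδ]
  have hξδ : 0 ≤ -(ξ * δ) := by linarith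
  have haL : 0 ≤ a * L := by positivity
  linarith [mul_le_mul_of_nonneg_left hD' (by positivity : (0 : ℝ) ≤ 8 * a * L),
    mul_nonneg (mul_nonneg (by linarith : (0 : ℝ) ≤ 2 - a) haL) hξδ]

lemma coupling_le_of_large_gradient (ha0 : 0 < a) (ha1 : a ≤ 1) (hμ : 0 < μ) (hL : L = 4 / μ)
    (hξ : ξ = -1) (hη : η ≤ 0) (hg : g = ξ + η)
    (ht₀ : 0 ≤ t) (hstep : w * t ≤ 2 * a) (ht : t = a * L * δ) (hregret : a * -r ≤ 3 * t)
    (hD : -g * δ - 3 / 4 * (w / μ) * (1 - g) * δ ^ 2 ≤ D) :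
    a * η * r + a ^ 2 * L * ξ * -δ ≤ 8 * a * L * D := by
  have hL0 : 0 < L := hL ▸ div_pos four_pos hμ
  have hwμ : w / μ = w * L / 4 := by rw [hL]; field_simp
  have haL : 0 < a * L := mul_pos ha0 hL0
  subst ht
  have hδ₀ : 0 ≤ δ := (mul_nonneg_iff_of_pos_left haL).mp ht₀
  have hwLδ : w * L * δ ≤ 2 := by
    have : a * (w * L * δ) ≤ a * 2 := by linarith
    exact le_of_mul_le_mul_left this ha0
  have hD' : δ / 4 + 5 / 8 * (-η) * δ ≤ D := by
    rw [hwμ, hg, hξ] at hD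
    linarith [mul_le_mul_of_nonneg_right hwLδ (mul_nonneg hδ₀ (by linarith : 0 ≤ 2 - η))]
  rw [hξ]
  linarith [mul_le_mul_of_nonneg_left hregret (by linarith : 0 ≤ -η),
    mul_le_mul_of_nonneg_left hD' (by positivity : (0 : ℝ) ≤ 8 * a * L),
    mul_nonneg (mul_nonneg (by linarith : (0 : ℝ) ≤ 2 - a) haL.le) hδ₀,
    mul_nonneg (mul_nonneg (by linarith : (0 : ℝ) ≤ -η) haL.le) hδ₀]

end Coupling

end

theorem coupling_loss_regret_general
    (m n : ℕ) (μ L : ℝ) (hμ : 0 < μ) (hL : L = 4 / μ)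
    (A : Matrix (Fin m) (Fin n) ℝ) (hA : ∀ j i, 0 ≤ A j i)
    (hcol : ∀ i, ∃ j, 0 < A j i)
    (Anorm : Fin n → ℝ)
    (hAnorm : ∀ i, IsGreatest {a : ℝ | ∃ j, A j i = a} (Anorm i))
    (x zbar u : Fin n → ℝ)
    (hzbar : ∀ k, 0 ≤ zbar k ∧ zbar k ≤ 3 / Anorm k)
    (hu : ∀ k, 0 ≤ u k ∧ u k ≤ 3 / Anorm k)
    (i : Fin n) (a : ℝ) (ha0 : 0 < a) (ha1 : a ≤ 1)
    (g ξ η : ℝ)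
    (hg : g = 1 - ∑ j, A j i * Real.exp ((1 - ∑ k, A j k * x k) / μ))
    (hξ : ξ = max g (-1)) (hη : η = g - ξ)
    (z' : Fin n → ℝ)
    (hz'mem : ∀ k, 0 ≤ z' k ∧ z' k ≤ 3 / Anorm k)
    (hz' : IsMinOn (fun z : Fin n → ℝ =>
        (1/2) * ∑ k, Anorm k * (zbar k - z k)^2 + a * ξ * z i)
        {z : Fin n → ℝ | ∀ k, 0 ≤ z k ∧ z k ≤ 3 / Anorm k} z')
    (y : Fin n → ℝ) (hy : y = x + (1 / (a * L)) • (z' - zbar)) :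
    a * η * (zbar i - u i) + a^2 * L * ξ * (x i - y i)
      ≤ 8 * a * L *
        (((∑ k, x k) + μ * ∑ j, Real.exp ((1 - ∑ k, A j k * x k) / μ)) -
         ((∑ k, y k) + μ * ∑ j, Real.exp ((1 - ∑ k, A j k * y k) / μ))) := by
  have hAw : ∀ j, A j i ≤ Anorm i := fun j => (hAnorm i).2 ⟨j, rfl⟩
  have hw : ∀ k, 0 < Anorm k := fun k =>
    (hcol k).elim fun j hj => hj.trans_le ((hAnorm k).2 ⟨j, rfl⟩)
  have haL : 0 < a * L := mul_pos ha0 (hL ▸ div_pos four_pos hμ)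
  have hz'_sub := sub_eq_single_of_isMinOn_proxObjective hw hzbar hz'mem hz'
  have hmin := isMinOn_proxObjective_coord (fun k => (hw k).le) hzbar hz'
  set t := z' i - zbar i
  set δ := t / (a * L)
  have ht : t = a * L * δ := (mul_div_cancel₀ t haL.ne').symm
  have hy' : y = x + Pi.single i δ := by
    rw [hy, hz'_sub, ← Pi.single_smul', smul_eq_mul, one_div_mul_eq_div]
  have hquad : Anorm i * t ^ 2 + 2 * (a * ξ) * t ≤ 0 := sq_add_nonpos_of_isMinOn (hzbar i) hmin
  have hgrad : smoothedCoverGrad μ A x i = ξ + η := by rw [hη, add_sub_cancel, hg]; rfl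
  have hξ_abs : |ξ| ≤ 1 := abs_le.mpr
    ⟨hξ ▸ le_max_right _ _, hξ ▸ max_le (hg ▸ smoothedCoverGrad_le_one x (hA · i)) (by norm_num)⟩
  have hstep : Anorm i * |t| ≤ 2 * a := (mul_abs_le_of_sq_add_le hquad).trans <| by
    rw [abs_mul, abs_of_pos ha0]
    linarith [mul_le_of_le_one_right ha0.le hξ_abs]
  have hD := le_smoothedCover_sub_add_single x i δ hμ (hA · i) hAw
    (mul_abs_div_le ha0 hμ hL hstep)
  rw [hy', Pi.add_apply, Pi.single_eq_same, sub_add_cancel_left]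
  rcases le_or_gt (-1) g with hg1 | hg1
  · have hη0 : η = 0 := by rw [hη, hξ, max_eq_left hg1, sub_self]
    rw [hη0, mul_zero, zero_mul, zero_add]
    exact coupling_le_of_small_gradient ha0 ha1 hμ hL (hw i).le (hξ ▸ le_max_right _ _)
      (by rw [hgrad, hη0, add_zero]) hquad ht hD
  · have hξ1 : ξ = -1 := by rw [hξ, max_eq_right hg1.le]
    have ht₀ : 0 ≤ t := by rw [hξ1] at hquad; nlinarith [mul_nonneg (hw i).le (sq_nonneg t)]
    have hregret := mul_sub_le_of_isMinOn (hw i) ha0 ha1 (hzbar i) (hu i)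
      (by simpa only [hξ1, mul_neg_one] using hmin)
    exact coupling_le_of_large_gradient ha0 ha1 hμ hL hξ1 (by linarith) hgrad ht₀
      (by rwa [abs_of_nonneg ht₀] at hstep) ht (by rwa [neg_sub]) hD

/-- Coupling inequality: the gradient descent improvement covers both the loss from the
large component `η` of the truncated gradient and the mirror descent regret:
`a·η·(z̄_i − u_i) + a²L·ξ·(x_i − y_i) ≤ 8aL·(f_μ(x) − f_μ(y))`. -/
theorem coupling_loss_regret
    (m n : ℕ) (μ L : ℝ) (hμ : 0 < μ) (hL : L = 4 / μ)
    (A : Matrix (Fin m) (Fin n) ℝ) (hA : ∀ j i, 0 ≤ A j i)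
    (hcol : ∀ i, ∃ j, 0 < A j i)
    (Anorm : Fin n → ℝ)
    (hAnorm : ∀ i, IsGreatest {a : ℝ | ∃ j, A j i = a} (Anorm i))
    (x zbar u : Fin n → ℝ)
    (hx : ∀ k, 0 ≤ x k ∧ x k ≤ 3 / Anorm k)
    (hzbar : ∀ k, 0 ≤ zbar k ∧ zbar k ≤ 3 / Anorm k)
    (hu : ∀ k, 0 ≤ u k ∧ u k ≤ 3 / Anorm k)
    (i : Fin n) (a : ℝ) (ha0 : 0 < a) (ha1 : a ≤ 1)
    (g ξ η : ℝ)
    (hg : g = 1 - ∑ j, A j i * Real.exp ((1 - ∑ k, A j k * x k) / μ))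
    (hξ : ξ = max g (-1)) (hη : η = g - ξ)
    (z' : Fin n → ℝ)
    (hz'mem : ∀ k, 0 ≤ z' k ∧ z' k ≤ 3 / Anorm k)
    (hz' : IsMinOn (fun z : Fin n → ℝ =>
        (1/2) * ∑ k, Anorm k * (zbar k - z k)^2 + a * ξ * z i)
        {z : Fin n → ℝ | ∀ k, 0 ≤ z k ∧ z k ≤ 3 / Anorm k} z')
    (y : Fin n → ℝ) (hy : y = x + (1 / (a * L)) • (z' - zbar)) :
    a * η * (zbar i - u i) + a^2 * L * ξ * (x i - y i)
      ≤ 8 * a * L *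
        (((∑ k, x k) + μ * ∑ j, Real.exp ((1 - ∑ k, A j k * x k) / μ)) -
         ((∑ k, y k) + μ * ∑ j, Real.exp ((1 - ∑ k, A j k * y k) / μ))) :=
  coupling_loss_regret_general m n μ L hμ hL A hA hcol Anorm hAnorm x zbar u hzbar hu i a ha0 ha1 g
    ξ η hg hξ hη z' hz'mem hz' y hy
end
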